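/- Let X and Y be real Hilbert spaces and let a : X×Y → ℝ∪{+∞} be such that for every y ∈ Y the function a(·,y) is proper Φ_lsc-convex on X, and for every x ∈ X the function a(x,·) is concave on Y. Suppose that for every real β < inf_{x∈X} sup_{y∈Y} a(x,y) and every ε > 0 there exist y₁, y₂ ∈ Y and x̄ ∈ X with a(x̄,y₁) ≥ β and a(x̄,y₂) ≥ β such that (0,0) ∈ co(∂^ε_lsc a(·,y₁)(x̄) ∪ ∂^ε_lsc a(·,y₂)(x̄)). Then sup_{y∈Y} inf_{x∈X} a(x,y) = inf_{x∈X} sup_{y∈Y} a(x,y). -/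

import Mathlib

open scoped RealInnerProductSpace

noncomputable section

/-- The class `Φ_lsc` of continuous functions `x ↦ -a‖x‖² + ⟪v,x⟫ + c` with `a ≥ 0`. -/
def PhiLsc (X : Type*) [NormedAddCommGroup X] [InnerProductSpace ℝ X] : Set (X → ℝ) :=
  {φ | ∃ a : ℝ, ∃ v : X, ∃ c : ℝ, 0 ≤ a ∧ ∀ x, φ x = -a * ‖x‖ ^ 2 + ⟪v, x⟫ + c}

/-- The support set `supp(f) = {φ ∈ Φ_lsc : φ ≤ f}` of `f : X → ℝ∪{+∞}`. -/
def PhiSupp {X : Type*} [NormedAddCommGroup X] [InnerProductSpace ℝ X] (f : X → EReal) :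
    Set (X → ℝ) :=
  {φ | φ ∈ PhiLsc X ∧ ∀ x, (φ x : EReal) ≤ f x}

/-- The effective domain of `f`. -/
def PhiDom {X : Type*} (f : X → EReal) : Set X := {x | f x < ⊤}

/-- `f` is `Φ_lsc`-convex: it is the pointwise supremum of its support set. -/
def PhiConvexOn {X : Type*} [NormedAddCommGroup X] [InnerProductSpace ℝ X] (f : X → EReal) :
    Prop :=
  ∀ x, f x = ⨆ φ ∈ PhiSupp f, (φ x : EReal)

/-- The set of `ε`-`Φ_lsc`-subgradients of `f` at `xb`:
pairs `(a,v)`, `a ≥ 0`, with `f x - f xb ≥ ⟪v, x - xb⟫ - a‖x‖² + a‖xb‖² - ε` for all `x`. -/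
def SubLscE {X : Type*} [NormedAddCommGroup X] [InnerProductSpace ℝ X] (f : X → EReal)
    (ε : ℝ) (xb : X) : Set (ℝ × X) :=
  {p | 0 ≤ p.1 ∧ ∀ x : X,
    f xb + ((⟪p.2, x - xb⟫ - p.1 * ‖x‖ ^ 2 + p.1 * ‖xb‖ ^ 2 - ε : ℝ) : EReal) ≤ f x}

/-- The set of local `Φ_lsc`-subgradients of `f` at `xb`. -/
def SubLscLoc {X : Type*} [NormedAddCommGroup X] [InnerProductSpace ℝ X] (f : X → EReal)
    (xb : X) : Set (ℝ × X) :=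
  {p | 0 ≤ p.1 ∧ ∃ δ : ℝ, 0 < δ ∧ ∀ x : X, ‖x - xb‖ < δ →
    f xb + ((⟪p.2, x - xb⟫ - p.1 * ‖x‖ ^ 2 + p.1 * ‖xb‖ ^ 2 : ℝ) : EReal) ≤ f x}

/-- `f` is paraconvex (with exponent 2). -/
def ParaconvexOn {X : Type*} [NormedAddCommGroup X] [InnerProductSpace ℝ X]
    (f : X → EReal) : Prop :=
  ∃ C : ℝ, 0 < C ∧ ∀ x y : X, ∀ t : ℝ, t ∈ Set.Icc (0 : ℝ) 1 →
    f (t • x + (1 - t) • y) ≤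
      (t : EReal) * f x + ((1 - t : ℝ) : EReal) * f y + ((C * ‖x - y‖ ^ 2 : ℝ) : EReal)

/-- The proximal subdifferential of `f` at `xb`. -/
def ProxSub {X : Type*} [NormedAddCommGroup X] [InnerProductSpace ℝ X] (f : X → EReal)
    (xb : X) : Set X :=
  {v | ∃ δ : ℝ, 0 < δ ∧ ∃ ρ : ℝ, 0 ≤ ρ ∧ ∀ x : X, ‖x - xb‖ < δ →
    f xb + ((⟪v, x - xb⟫ - ρ / 2 * ‖x - xb‖ ^ 2 : ℝ) : EReal) ≤ f x}

/-- The Dini subdifferential of `f` at `xb`. -/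
def DiniSub {X : Type*} [NormedAddCommGroup X] [InnerProductSpace ℝ X] (f : X → EReal)
    (xb : X) : Set X :=
  {w | ∀ h : X, ∀ t : ℕ → ℝ, ∀ u : ℕ → X, (∀ n, 0 < t n) →
    Filter.Tendsto t Filter.atTop (nhds 0) → Filter.Tendsto u Filter.atTop (nhds h) →
    ((⟪w, h⟫ : ℝ) : EReal) ≤
      Filter.liminf (fun n => (f (xb + t n • u n) - f xb) * (((t n)⁻¹ : ℝ) : EReal)) Filter.atTop}

/-- The `Φ_lsc`-subgradients of a real-valued `f` at `xb`. -/
def SubLscR {X : Type*} [NormedAddCommGroup X] [InnerProductSpace ℝ X] (f : X → ℝ)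
    (xb : X) : Set (ℝ × X) :=
  {p | 0 ≤ p.1 ∧ ∀ x : X,
    ⟪p.2, x - xb⟫ - p.1 * ‖x‖ ^ 2 + p.1 * ‖xb‖ ^ 2 ≤ f x - f xb}

/-!
Weak duality gives `sup inf ≤ inf sup`. For the converse fix `β < inf sup` and `ε > 0`. The sets
`∂^ε_lsc a(·, yᵢ)(x̄)` are convex, so `(0, 0)` is either one of their points or a convex combination
`t p + (1 - t) q` of a point of each. The increment `φ(x) - φ(x̄)` of `φ = -c‖·‖² + ⟪v, ·⟫` is linear
in `(c, v)`, so it vanishes on that combination, and adding the two subgradient inequalities with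
weights `t, 1 - t` gives `β - ε ≤ t a(x, y₁) + (1 - t) a(x, y₂) ≤ a(x, t y₁ + (1 - t) y₂)` for every
`x`, by concavity in `y`. Hence `β - ε ≤ sup inf`.
-/

namespace PhiLsc

variable {X : Type*} [NormedAddCommGroup X] [InnerProductSpace ℝ X]

/-- `(c, v) ↦ φ x - φ xb` for `φ = -c‖·‖² + ⟪v, ·⟫`. -/
def increment (x xb : X) : ℝ × X →ₗ[ℝ] ℝ where
  toFun p := ⟪p.2, x - xb⟫ - p.1 * ‖x‖ ^ 2 + p.1 * ‖xb‖ ^ 2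
  map_add' p q := by
    simp only [Prod.fst_add, Prod.snd_add, inner_add_left]
    ring
  map_smul' r p := by
    simp only [Prod.smul_fst, Prod.smul_snd, real_inner_smul_left, smul_eq_mul, RingHom.id_apply]
    ring

theorem mem_subLscE_iff {f : X → EReal} {ε : ℝ} {xb : X} {p : ℝ × X} :
    p ∈ SubLscE f ε xb ↔ 0 ≤ p.1 ∧ ∀ x, f xb + ((increment x xb p - ε : ℝ) : EReal) ≤ f x :=
  Iff.rfl

theorem convex_subLscE (f : X → EReal) (ε : ℝ) (xb : X) : Convex ℝ (SubLscE f ε xb) := by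
  have hlevel : ∀ x, Convex ℝ {r : ℝ | f xb + ((r - ε : ℝ) : EReal) ≤ f x} := fun x =>
    IsLowerSet.ordConnected (fun r s hsr hr =>
      le_trans (add_le_add_right (EReal.coe_le_coe_iff.2 (by linarith)) _) hr) |>.convex
  have hfst : Convex ℝ {p : ℝ × X | 0 ≤ p.1} :=
    (convex_Ici (0 : ℝ)).linear_preimage (LinearMap.fst ℝ ℝ X)
  convert hfst.inter (convex_iInter fun x => (hlevel x).linear_preimage (increment x xb)) using 1
  ext p
  simp [mem_subLscE_iff]

theorem coe_add_sub_le_of_mem_subLscE {f : X → EReal} {β ε : ℝ} {xb : X} {p : ℝ × X}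
    (hβ : (β : EReal) ≤ f xb) (hp : p ∈ SubLscE f ε xb) (x : X) :
    ((β + (increment x xb p - ε) : ℝ) : EReal) ≤ f x := by
  rw [EReal.coe_add]
  exact le_trans (add_le_add_left hβ _) (hp.2 x)

theorem coe_sub_le_of_zero_mem_subLscE {f : X → EReal} {β ε : ℝ} {xb : X}
    (hβ : (β : EReal) ≤ f xb) (h0 : (0 : ℝ × X) ∈ SubLscE f ε xb) (x : X) :
    ((β - ε : ℝ) : EReal) ≤ f x := by
  simpa [sub_eq_add_neg] using coe_add_sub_le_of_mem_subLscE hβ h0 x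

theorem coe_sub_le_of_combination_mem_subLscE {f₁ f₂ : X → EReal} {β ε t : ℝ} {xb : X}
    {p q : ℝ × X} (hp : p ∈ SubLscE f₁ ε xb) (hq : q ∈ SubLscE f₂ ε xb)
    (hβ₁ : (β : EReal) ≤ f₁ xb) (hβ₂ : (β : EReal) ≤ f₂ xb) (ht₀ : 0 ≤ t) (ht₁ : t ≤ 1)
    (hpq : t • p + (1 - t) • q = 0) (x : X) :
    ((β - ε : ℝ) : EReal) ≤ (t : EReal) * f₁ x + ((1 - t : ℝ) : EReal) * f₂ x := by
  have hinc : t * increment x xb p + (1 - t) * increment x xb q = 0 := by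
    simpa using congrArg (increment x xb) hpq
  have hsplit :
      β - ε = t * (β + (increment x xb p - ε)) + (1 - t) * (β + (increment x xb q - ε)) := by
    linear_combination -hinc
  rw [hsplit, EReal.coe_add, EReal.coe_mul, EReal.coe_mul]
  gcongr
  · exact coe_add_sub_le_of_mem_subLscE hβ₁ hp x
  · exact coe_add_sub_le_of_mem_subLscE hβ₂ hq x

end PhiLsc

open PhiLsc

theorem exists_forall_coe_sub_le_of_zero_mem_convexHull
    {X : Type*} [NormedAddCommGroup X] [InnerProductSpace ℝ X]
    {Y : Type*} [NormedAddCommGroup Y] [InnerProductSpace ℝ Y] {a : X × Y → EReal}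
    (hconc : ∀ x : X, ∀ y₁ y₂ : Y, ∀ t ∈ Set.Icc (0 : ℝ) 1,
      (t : EReal) * a (x, y₁) + ((1 - t : ℝ) : EReal) * a (x, y₂) ≤
        a (x, t • y₁ + (1 - t) • y₂))
    {β ε : ℝ} {y₁ y₂ : Y} {xb : X} (h₁ : (β : EReal) ≤ a (xb, y₁))
    (h₂ : (β : EReal) ≤ a (xb, y₂))
    (h0 : ((0, 0) : ℝ × X) ∈ convexHull ℝ
      (SubLscE (fun x => a (x, y₁)) ε xb ∪ SubLscE (fun x => a (x, y₂)) ε xb)) :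
    ∃ y : Y, ∀ x : X, ((β - ε : ℝ) : EReal) ≤ a (x, y) := by
  set A := SubLscE (fun x => a (x, y₁)) ε xb
  set B := SubLscE (fun x => a (x, y₂)) ε xb
  have hA : Convex ℝ A := convex_subLscE _ _ _
  have hB : Convex ℝ B := convex_subLscE _ _ _
  rcases A.eq_empty_or_nonempty with hA₀ | hA₀
  · rw [hA₀, Set.empty_union, hB.convexHull_eq] at h0
    exact ⟨y₂, coe_sub_le_of_zero_mem_subLscE h₂ h0⟩
  rcases B.eq_empty_or_nonempty with hB₀ | hB₀
  · rw [hB₀, Set.union_empty, hA.convexHull_eq] at h0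
    exact ⟨y₁, coe_sub_le_of_zero_mem_subLscE h₁ h0⟩
  rw [hA.convexHull_union hB hA₀ hB₀, mem_convexJoin] at h0
  obtain ⟨p, hp, q, hq, t, u, ht, hu, htu, hpq⟩ := h0
  obtain rfl : u = 1 - t := by linarith
  refine ⟨t • y₁ + (1 - t) • y₂, fun x => ?_⟩
  exact (coe_sub_le_of_combination_mem_subLscE hp hq h₁ h₂ ht (by linarith) hpq x).trans
    (hconc x y₁ y₂ t ⟨ht, by linarith⟩)

theorem stmt_16_general {X : Type*} [NormedAddCommGroup X] [InnerProductSpace ℝ X]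
    {Y : Type*} [NormedAddCommGroup Y] [InnerProductSpace ℝ Y]
    (a : X × Y → EReal)
    (hconc : ∀ x : X, ∀ y₁ y₂ : Y, ∀ t ∈ Set.Icc (0 : ℝ) 1,
      (t : EReal) * a (x, y₁) + ((1 - t : ℝ) : EReal) * a (x, y₂) ≤
        a (x, t • y₁ + (1 - t) • y₂))
    (hzs : ∀ β : ℝ, (β : EReal) < ⨅ x : X, ⨆ y : Y, a (x, y) → ∀ ε : ℝ, 0 < ε →
      ∃ y₁ y₂ : Y, ∃ xb : X, (β : EReal) ≤ a (xb, y₁) ∧ (β : EReal) ≤ a (xb, y₂) ∧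
        ((0, 0) : ℝ × X) ∈ convexHull ℝ
          (SubLscE (fun x => a (x, y₁)) ε xb ∪ SubLscE (fun x => a (x, y₂)) ε xb)) :
    (⨆ y : Y, ⨅ x : X, a (x, y)) = ⨅ x : X, ⨆ y : Y, a (x, y) := by
  refine le_antisymm (iSup_iInf_le_iInf_iSup fun y x => a (x, y)) ?_
  refine EReal.ge_of_forall_gt_iff_ge.1 fun β hβ => EReal.ge_of_forall_gt_iff_ge.1 fun γ hγ => ?_
  have hγβ : γ < β := EReal.coe_lt_coe_iff.1 hγ
  obtain ⟨y₁, y₂, xb, h₁, h₂, h0⟩ := hzs β hβ (β - γ) (sub_pos.2 hγβ)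
  obtain ⟨y, hy⟩ := exists_forall_coe_sub_le_of_zero_mem_convexHull hconc h₁ h₂ h0
  calc (γ : EReal) = ((β - (β - γ) : ℝ) : EReal) := by rw [sub_sub_cancel]
    _ ≤ ⨅ x, a (x, y) := le_iInf hy
    _ ≤ ⨆ y, ⨅ x, a (x, y) := le_iSup (fun y => ⨅ x, a (x, y)) y

/-- the zero subgradient condition with `ε > 0` at levels `β` below `inf sup`
is a sufficient condition for the minimax equality. -/
theorem stmt_16 {X : Type*} [NormedAddCommGroup X] [InnerProductSpace ℝ X] [CompleteSpace X]
    {Y : Type*} [NormedAddCommGroup Y] [InnerProductSpace ℝ Y] [CompleteSpace Y]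
    (a : X × Y → EReal) (hbot : ∀ p, a p ≠ ⊥)
    (hconv : ∀ y : Y, PhiConvexOn (fun x => a (x, y)))
    (hsupp : ∀ y : Y, (PhiSupp (fun x => a (x, y))).Nonempty)
    (hdom : ∀ y : Y, (PhiDom (fun x => a (x, y))).Nonempty)
    (hconc : ∀ x : X, ∀ y₁ y₂ : Y, ∀ t ∈ Set.Icc (0 : ℝ) 1,
      (t : EReal) * a (x, y₁) + ((1 - t : ℝ) : EReal) * a (x, y₂) ≤
        a (x, t • y₁ + (1 - t) • y₂))
    (hzs : ∀ β : ℝ, (β : EReal) < ⨅ x : X, ⨆ y : Y, a (x, y) → ∀ ε : ℝ, 0 < ε →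
      ∃ y₁ y₂ : Y, ∃ xb : X, (β : EReal) ≤ a (xb, y₁) ∧ (β : EReal) ≤ a (xb, y₂) ∧
        ((0, 0) : ℝ × X) ∈ convexHull ℝ
          (SubLscE (fun x => a (x, y₁)) ε xb ∪ SubLscE (fun x => a (x, y₂)) ε xb)) :
    (⨆ y : Y, ⨅ x : X, a (x, y)) = ⨅ x : X, ⨆ y : Y, a (x, y) :=
  stmt_16_general a hconc hzs
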